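/- Let q be a real number and x a real number with 1+(q-1)x ≠ 0. Then the q-rational transition map satisfies (D₋₁ g_q)(x) = q + (1-q)·g_q(x) and (D₁ g_q)(x) = (q-1)·g_q(x) + g_q(x)², i.e., (1+(q-1)x)·g_q'(x) = q + (1-q)·g_q(x) and (1+(x-1)q)·x·g_q'(x) = (q-1)·g_q(x) + g_q(x)². -/

import Mathlib

/-!
`g_q` is the Möbius map `x ↦ (q x + (1 - q)) / ((q - 1) x + 1)` of determinant `q² - q + 1`, so
`g_q' = (q² - q + 1) / D²` with `D = 1 + (q - 1) x`. Both identities then follow from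
`q + (1 - q) g_q = (q² - q + 1) / D` and `(q - 1) + g_q = (q² - q + 1) x / D`, the second because
`D₁ g_q - ((q - 1) g_q + g_q²) = g_q · (D x g_q' - ((q - 1) + g_q))`.
-/

/-- The q-rational transition map. -/
noncomputable def gq (q x : ℝ) : ℝ := (1 + (x - 1) * q) / (1 + (q - 1) * x)

lemma hasDerivAt_div_affine (a b c d x : ℝ) (hx : c * x + d ≠ 0) :
    HasDerivAt (fun y => (a * y + b) / (c * y + d)) ((a * d - b * c) / (c * x + d) ^ 2) x := by
  have hnum : HasDerivAt (fun y => a * y + b) a x := by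
    simpa using ((hasDerivAt_id x).const_mul a).add_const b
  have hden : HasDerivAt (fun y => c * y + d) c x := by
    simpa using ((hasDerivAt_id x).const_mul c).add_const d
  exact (hnum.div hden hx).congr_deriv (by ring)

lemma gq_eq_div_affine (q : ℝ) : gq q = fun y => (q * y + (1 - q)) / ((q - 1) * y + 1) := by
  funext y
  rw [gq]
  congr 1 <;> ring

lemma hasDerivAt_gq (q x : ℝ) (hx : 1 + (q - 1) * x ≠ 0) :
    HasDerivAt (gq q) ((q ^ 2 - q + 1) / (1 + (q - 1) * x) ^ 2) x := by
  rw [gq_eq_div_affine]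
  convert hasDerivAt_div_affine q (1 - q) (q - 1) 1 x (by rwa [add_comm]) using 1
  rw [add_comm ((q - 1) * x)]
  ring

lemma add_one_sub_mul_gq (q x : ℝ) (hx : 1 + (q - 1) * x ≠ 0) :
    q + (1 - q) * gq q x = (q ^ 2 - q + 1) / (1 + (q - 1) * x) := by
  rw [eq_div_iff hx, gq, add_mul, mul_assoc, div_mul_cancel₀ _ hx]
  ring

lemma sub_one_add_gq (q x : ℝ) (hx : 1 + (q - 1) * x ≠ 0) :
    q - 1 + gq q x = (q ^ 2 - q + 1) * x / (1 + (q - 1) * x) := by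
  rw [eq_div_iff hx, gq, add_mul, div_mul_cancel₀ _ hx]
  ring

/-- `D₋₁(g_q) = q + (1-q)·g_q` and `D₁(g_q) = (q-1)·g_q + g_q²`. -/
theorem gq_under_Dm1_D1 (q x : ℝ) (hx : 1 + (q - 1) * x ≠ 0) :
    ((1 + (q - 1) * x) * deriv (gq q) x = q + (1 - q) * gq q x) ∧
    ((1 + (x - 1) * q) * x * deriv (gq q) x = (q - 1) * gq q x + gq q x ^ 2) := by
  rw [(hasDerivAt_gq q x hx).deriv]
  constructor
  · rw [add_one_sub_mul_gq q x hx]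
    field_simp
  · rw [show (q - 1) * gq q x + gq q x ^ 2 = gq q x * (q - 1 + gq q x) by ring,
      sub_one_add_gq q x hx, gq]
    field_simp
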